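/- arXiv:2009.07911 — 2 statements merged into one kernel-verified Lean document; each statement's English description precedes it below -/
import Mathlib

section
/- Let $\{F_n\}$ be a sequence of functions $F_n:\{0,\dots,n\}\to\mathbb{R}$ and for each $n$ let $\mathcal{N}(n)\in\{0,\dots,n-1\}$ satisfy $\mathcal{N}(n)/n < F_n(\mathcal{N}(n))$ and $(\mathcal{N}(n)+1)/n \geq F_n(\mathcal{N}(n)+1)$. Suppose $f_n(x)=F_n(\lfloor nx\rfloor)$ converges uniformly on $[0,1]$ to a continuous function $f$, and that $\theta$ is the unique solution in $[0,1]$ of $x=f(x)$. Then $\lim_{n\to\infty}\mathcal{N}(n)/n=\theta$. -/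
open Filter Topology Set

theorem stmt_1
    (F : ℕ → ℕ → ℝ) (N : ℕ → ℕ) (f : ℝ → ℝ) (θ : ℝ)
    (hN : ∀ n, N n ≤ n - 1)
    (hlt : ∀ n, (N n : ℝ) / n < F n (N n))
    (hge : ∀ n, (N n + 1 : ℝ) / n ≥ F n (N n + 1))
    (hconv : TendstoUniformlyOn (fun n x => F n ⌊(n : ℝ) * x⌋₊) f atTop (Set.Icc 0 1))
    (hf : ContinuousOn f (Set.Icc 0 1))
    (hθ : θ ∈ Set.Icc (0 : ℝ) 1) (hfix : f θ = θ)
    (huniq : ∀ x ∈ Set.Icc (0 : ℝ) 1, f x = x → x = θ) :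
    Tendsto (fun n => (N n : ℝ) / n) atTop (𝓝 θ) := by
  set x : ℕ → ℝ := fun n => (N n : ℝ) / n with hxdef
  set y : ℕ → ℝ := fun n => ((N n : ℝ) + 1) / n with hydef
  have hNn : ∀ n, 1 ≤ n → N n < n := by
    intro n hn
    have := hN n
    omega
  have hmemx : ∀ n, x n ∈ Icc (0:ℝ) 1 := by
    intro n
    rcases Nat.eq_zero_or_pos n with h | h
    · subst h; simp [hxdef]
    · constructor
      · positivity
      · rw [div_le_one (by exact_mod_cast h)]
        exact_mod_cast (hNn n h).le
  have hmemy : ∀ n, 1 ≤ n → y n ∈ Icc (0:ℝ) 1 := by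
    intro n h
    constructor
    · positivity
    · rw [div_le_one (by exact_mod_cast h)]
      have := hNn n h
      exact_mod_cast this
  have hfloorx : ∀ n : ℕ, 1 ≤ n → ⌊(n : ℝ) * x n⌋₊ = N n := by
    intro n h
    have hn : (n:ℝ) ≠ 0 := by positivity
    rw [hxdef]
    simp only
    rw [mul_comm, div_mul_cancel₀ _ hn, Nat.floor_natCast]
  have hfloory : ∀ n : ℕ, 1 ≤ n → ⌊(n : ℝ) * y n⌋₊ = N n + 1 := by
    intro n h
    have hn : (n:ℝ) ≠ 0 := by positivity
    rw [hydef]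
    simp only
    rw [mul_comm, div_mul_cancel₀ _ hn]
    rw [show ((N n : ℝ) + 1) = ((N n + 1 : ℕ) : ℝ) by push_cast; ring, Nat.floor_natCast]
  have hyx : ∀ n, y n = x n + 1 / n := by
    intro n; rw [hxdef, hydef]; simp only [add_div]
  -- key: any subsequential limit is θ
  have key : ∀ ψ : ℕ → ℕ, Tendsto ψ atTop atTop → ∀ L ∈ Icc (0:ℝ) 1,
      Tendsto (fun k => x (ψ k)) atTop (𝓝 L) → L = θ := by
    intro ψ hψ L hL hxL
    have hev1 : ∀ᶠ k in atTop, 1 ≤ ψ k := hψ.eventually_ge_atTop 1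
    have hyL : Tendsto (fun k => y (ψ k)) atTop (𝓝 L) := by
      have h0 : Tendsto (fun k => 1 / (ψ k : ℝ)) atTop (𝓝 0) :=
        tendsto_one_div_atTop_nhds_zero_nat.comp hψ
      have := hxL.add h0
      rw [add_zero] at this
      simpa only [hyx] using this
    have hxLw : Tendsto (fun k => x (ψ k)) atTop (𝓝[Icc (0:ℝ) 1] L) :=
      tendsto_nhdsWithin_of_tendsto_nhds_of_eventually_within _ hxL
        (Eventually.of_forall fun k => hmemx (ψ k))
    have hyLw : Tendsto (fun k => y (ψ k)) atTop (𝓝[Icc (0:ℝ) 1] L) :=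
      tendsto_nhdsWithin_of_tendsto_nhds_of_eventually_within _ hyL
        (hev1.mono fun k hk => hmemy (ψ k) hk)
    have hconvψ : TendstoUniformlyOn (fun k z => F (ψ k) ⌊(ψ k : ℝ) * z⌋₊) f atTop
        (Icc (0:ℝ) 1) := fun u hu => hψ.eventually (hconv u hu)
    have T1 : Tendsto (fun k => F (ψ k) ⌊(ψ k : ℝ) * x (ψ k)⌋₊) atTop (𝓝 (f L)) :=
      hconvψ.tendsto_comp (hf L hL) hxLw
    have T2 : Tendsto (fun k => F (ψ k) ⌊(ψ k : ℝ) * y (ψ k)⌋₊) atTop (𝓝 (f L)) :=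
      hconvψ.tendsto_comp (hf L hL) hyLw
    have hle1 : L ≤ f L := by
      refine le_of_tendsto_of_tendsto hxL T1 ?_
      filter_upwards [hev1] with k hk
      rw [hfloorx (ψ k) hk]
      exact (hlt (ψ k)).le
    have hle2 : f L ≤ L := by
      refine le_of_tendsto_of_tendsto T2 hyL ?_
      filter_upwards [hev1] with k hk
      rw [hfloory (ψ k) hk]
      exact hge (ψ k)
    exact huniq L hL (le_antisymm hle2 hle1)
  -- conclude via subsequences and compactness
  apply tendsto_of_subseq_tendsto
  intro ns hns
  obtain ⟨L, hL, ms, hms, hconv2⟩ :=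
    (isCompact_Icc : IsCompact (Icc (0:ℝ) 1)).tendsto_subseq
      (x := fun k => x (ns k)) (fun k => hmemx (ns k))
  have hLθ : L = θ := key (ns ∘ ms) (hns.comp hms.tendsto_atTop) L hL hconv2
  exact ⟨ms, hLθ ▸ hconv2⟩
end

section
/- Let $\{F_n\}$, $\{G_n\}$, $\{H_n\}$ be sequences of functions on $\{0,\dots,n\}$ with $F_n(k)=G_n(k)+H_n(k)F_n(k+1)$ and $F_n(n)=\mu$. Define $f_n(x)=F_n(\lfloor nx\rfloor)$, $h_n(x)=n(1-H_n(\lfloor nx\rfloor))$, $g_n(x)=nG_n(\lfloor nx\rfloor)$. If $h_n\to h$ and $g_n\to g$ uniformly on every $[\varepsilon,\varepsilon']\subset(0,1)$ with $h,g$ continuous, and $f_n\to f$ uniformly on $[0,1]$ with $f$ continuous, then $f(1)=\mu$ and $f$ is differentiable on $(0,1)$ with $f'=fh-g$. -/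
/-!
`stepSlope (F n) n` is the step function equal to `n (F n (k + 1) - F n k)` on `[k/n, (k+1)/n)`,
a discrete derivative of `f_n`: its integral from `k/n` to `m/n` telescopes to `F n m - F n k`.
By the recurrence it equals `h_n(t) F_n(⌊nt⌋ + 1) - g_n(t)`, which converges uniformly on compact
subintervals of `(0, 1)` to `h f - g`; the shift by one grid step is harmless because `f` is
uniformly continuous on `[0, 1]`. Passing to the limit gives
`f y - f x = ∫ t in x..y, h t * f t - g t` for `0 < x < y < 1`, and the fundamental theorem of
calculus gives `f' = f h - g`.
Finally `f 1 = μ` because `f_n(1) = F_n(n) = μ`.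
-/

open Filter Topology Set MeasureTheory Uniformity

variable {ι α E : Type*} {l : Filter ι}

theorem natFloor_mul_add_one_div {n : ℕ} (hn : 0 < n) {x : ℝ} (hx : 0 ≤ x) :
    ⌊n * (x + 1 / n)⌋₊ = ⌊n * x⌋₊ + 1 := by
  rw [mul_add, mul_one_div_cancel (Nat.cast_pos.2 hn).ne', Nat.floor_add_one (by positivity)]

theorem natFloor_mul_lt {n : ℕ} (hn : 0 < n) {x : ℝ} (hx₀ : 0 ≤ x) (hx₁ : x < 1) :
    ⌊n * x⌋₊ < n :=
  (Nat.floor_lt (by positivity)).2 (mul_lt_of_lt_one_right (Nat.cast_pos.2 hn) hx₁)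

theorem tendsto_natFloor_mul_div_natCast {z : ℝ} (hz : 0 ≤ z) :
    Tendsto (fun n : ℕ => (⌊n * z⌋₊ : ℝ) / n) atTop (𝓝 z) := by
  refine ((tendsto_nat_floor_mul_div_atTop hz).comp tendsto_natCast_atTop_atTop).congr fun n => ?_
  simp only [Function.comp_apply, mul_comm]

theorem natFloor_mul_div_natCast_le {z : ℝ} (hz : 0 ≤ z) (n : ℕ) : (⌊n * z⌋₊ : ℝ) / n ≤ z := by
  rcases n.eq_zero_or_pos with rfl | hn
  · simpa using hz
  · rw [div_le_iff₀ (Nat.cast_pos.2 hn), mul_comm]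
    exact Nat.floor_le (by positivity)

theorem tendsto_natFloor_mul_div_natCast_nhdsWithin {c d z : ℝ} (hc : 0 ≤ c) (hz : z ∈ Ioc c d) :
    Tendsto (fun n : ℕ => (⌊n * z⌋₊ : ℝ) / n) atTop (𝓝[Icc c d] z) := by
  have hz0 : 0 ≤ z := hc.trans hz.1.le
  have hlim := tendsto_natFloor_mul_div_natCast hz0
  refine tendsto_nhdsWithin_iff.2 ⟨hlim, ?_⟩
  filter_upwards [hlim.eventually_const_lt hz.1] with n hn
  exact ⟨hn.le, (natFloor_mul_div_natCast_le hz0 n).trans hz.2⟩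

theorem tendstoUniformlyOn_iff_tendsto_sub_nhds_zero [SeminormedAddCommGroup E]
    {F : ι → α → E} {f : α → E} {s : Set α} :
    TendstoUniformlyOn F f l s ↔
      Tendsto (fun q : ι × α => F q.1 q.2 - f q.2) (l ×ˢ 𝓟 s) (𝓝 0) := by
  rw [tendstoUniformlyOn_iff_tendsto, tendsto_uniformity_iff_dist_tendsto_zero,
    tendsto_zero_iff_norm_tendsto_zero (f := fun q : ι × α => F q.1 q.2 - f q.2)]
  simp only [dist_eq_norm, norm_sub_rev]

theorem TendstoUniformlyOn.mul_of_bounded {R : Type*} [SeminormedRing R]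
    {F₁ F₂ : ι → α → R} {f₁ f₂ : α → R} {s : Set α}
    (h₁ : TendstoUniformlyOn F₁ f₁ l s) (h₂ : TendstoUniformlyOn F₂ f₂ l s)
    (hb₁ : ∃ C, ∀ x ∈ s, ‖f₁ x‖ ≤ C) (hb₂ : ∃ C, ∀ x ∈ s, ‖f₂ x‖ ≤ C) :
    TendstoUniformlyOn (fun i x => F₁ i x * F₂ i x) (fun x => f₁ x * f₂ x) l s := by
  rw [tendstoUniformlyOn_iff_tendsto_sub_nhds_zero] at *
  have bdd : ∀ f : α → R, (∃ C, ∀ x ∈ s, ‖f x‖ ≤ C) →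
      IsBoundedUnder (· ≤ ·) (l ×ˢ 𝓟 s) (fun q => ‖f q.2‖) := fun f ⟨C, hC⟩ =>
    isBoundedUnder_of_eventually_le (a := C) ((eventually_principal.2 hC).prod_inr l)
  have hsum := ((h₁.mul h₂).add (isBoundedUnder_le_mul_tendsto_zero (bdd f₁ hb₁) h₂)).add
    (h₁.zero_mul_isBoundedUnder_le (bdd f₂ hb₂))
  simp only [mul_zero, add_zero] at hsum
  refine hsum.congr fun q => ?_
  noncomm_ring

theorem TendstoUniformlyOn.comp_add_of_tendsto_zero [UniformSpace E]
    {F : ι → ℝ → E} {f : ℝ → E} {s t : Set ℝ} {δ : ι → ℝ}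
    (hF : TendstoUniformlyOn F f l s) (hf : UniformContinuousOn f s) (hts : t ⊆ s)
    (hδ : Tendsto δ l (𝓝 0)) (hmem : ∀ᶠ i in l, ∀ x ∈ t, x + δ i ∈ s) :
    TendstoUniformlyOn (fun i x => F i (x + δ i)) f l t := by
  rw [tendstoUniformlyOn_iff_tendsto] at *
  have hshift : ∀ᶠ q in l ×ˢ 𝓟 t, q.2 ∈ s ∧ q.2 + δ q.1 ∈ s := by
    filter_upwards [(eventually_principal.2 hts).prod_inr l,
      eventually_prod_principal_iff (p := fun q : ι × ℝ => q.2 + δ q.1 ∈ s) |>.2 hmem]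
      with q h₁ h₂ using ⟨h₁, h₂⟩
  have hclose : Tendsto (fun q : ι × ℝ => (q.2, q.2 + δ q.1)) (l ×ˢ 𝓟 t)
      (𝓤 ℝ ⊓ 𝓟 (s ×ˢ s)) := by
    refine tendsto_inf.2 ⟨?_, tendsto_principal.2 hshift⟩
    rw [tendsto_uniformity_iff_dist_tendsto_zero]
    simpa [Real.dist_eq] using (hδ.comp tendsto_fst).abs
  have hmove : Tendsto (fun q : ι × ℝ => (q.1, q.2 + δ q.1)) (l ×ˢ 𝓟 t) (l ×ˢ 𝓟 s) :=
    tendsto_fst.prodMk (tendsto_principal.2 (hshift.mono fun _ h => h.2))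
  exact (Tendsto.comp hf hclose).uniformity_trans (hF.comp hmove)

section Integral

variable [NormedAddCommGroup E] [NormedSpace ℝ E]

theorem ContinuousOn.tendsto_intervalIntegral {φ : ℝ → E} {c d x y : ℝ} {a b : ι → ℝ}
    (hφ : ContinuousOn φ (Icc c d)) (ha : Tendsto a l (𝓝[Icc c d] x))
    (hb : Tendsto b l (𝓝[Icc c d] y)) (hx : x ∈ Icc c d) (hy : y ∈ Icc c d) :
    Tendsto (fun i => ∫ t in a i..b i, φ t) l (𝓝 (∫ t in x..y, φ t)) := by
  have hint : ∀ u ∈ Icc c d, ∀ v ∈ Icc c d, IntervalIntegrable φ volume u v :=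
    fun u hu v hv => (hφ.mono (uIcc_subset_Icc hu hv)).intervalIntegrable
  have hprim : ContinuousOn (fun u => ∫ t in c..u, φ t) (Icc c d) := by
    have hcd : c ≤ d := hx.1.trans hx.2
    simpa [uIcc_of_le hcd] using intervalIntegral.continuousOn_primitive_interval'
      (hint c (left_mem_Icc.2 hcd) d (right_mem_Icc.2 hcd)) (left_mem_uIcc (a := c) (b := d))
  have hc : c ∈ Icc c d := left_mem_Icc.2 (hx.1.trans hx.2)
  have hlim := ((hprim y hy).tendsto.comp hb).sub ((hprim x hx).tendsto.comp ha)
  rw [intervalIntegral.integral_interval_sub_left (hint c hc y hy) (hint c hc x hx)] at hlim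
  refine hlim.congr' ?_
  filter_upwards [(tendsto_nhdsWithin_iff.1 ha).2, (tendsto_nhdsWithin_iff.1 hb).2] with i hai hbi
  exact intervalIntegral.integral_interval_sub_left (hint c hc _ hbi) (hint c hc _ hai)

theorem TendstoUniformlyOn.tendsto_intervalIntegral {u : ι → ℝ → E} {φ : ℝ → E}
    {c d x y : ℝ} {a b : ι → ℝ}
    (hu : TendstoUniformlyOn u φ l (Icc c d)) (hφ : ContinuousOn φ (Icc c d))
    (hui : ∀ᶠ i in l, IntervalIntegrable (u i) volume (a i) (b i))
    (ha : Tendsto a l (𝓝[Icc c d] x)) (hb : Tendsto b l (𝓝[Icc c d] y))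
    (hx : x ∈ Icc c d) (hy : y ∈ Icc c d) :
    Tendsto (fun i => ∫ t in a i..b i, u i t) l (𝓝 (∫ t in x..y, φ t)) := by
  have hmem : ∀ᶠ i in l, a i ∈ Icc c d ∧ b i ∈ Icc c d :=
    (tendsto_nhdsWithin_iff.1 ha).2.and (tendsto_nhdsWithin_iff.1 hb).2
  have herr : Tendsto (fun i => ∫ t in a i..b i, u i t - φ t) l (𝓝 0) := by
    rw [Metric.tendsto_nhds]
    intro ε hε
    have hcd : 0 ≤ d - c := sub_nonneg.2 (hx.1.trans hx.2)
    filter_upwards [Metric.tendstoUniformlyOn_iff.1 hu (ε / (d - c + 1)) (by positivity), hmem]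
      with i hi ⟨hai, hbi⟩
    have hbound : ∀ t ∈ uIoc (a i) (b i), ‖u i t - φ t‖ ≤ ε / (d - c + 1) := fun t ht => by
      rw [← dist_eq_norm, dist_comm]
      exact (hi t (uIcc_subset_Icc hai hbi (uIoc_subset_uIcc ht))).le
    have hlen : |b i - a i| ≤ d - c :=
      abs_sub_le_iff.2 ⟨by linarith [hai.1, hbi.2], by linarith [hai.2, hbi.1]⟩
    rw [dist_zero_right]
    calc ‖∫ t in a i..b i, u i t - φ t‖ ≤ ε / (d - c + 1) * |b i - a i| :=
          intervalIntegral.norm_integral_le_of_norm_le_const hbound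
      _ ≤ ε / (d - c + 1) * (d - c) := by gcongr
      _ < ε := by
          rw [div_mul_eq_mul_div, div_lt_iff₀ (by positivity)]
          nlinarith
  have := herr.add (hφ.tendsto_intervalIntegral ha hb hx hy)
  rw [zero_add] at this
  refine this.congr' ?_
  filter_upwards [hui, hmem] with i hi ⟨hai, hbi⟩
  rw [intervalIntegral.integral_sub hi ((hφ.mono (uIcc_subset_Icc hai hbi)).intervalIntegrable),
    sub_add_cancel]

theorem hasDerivAt_of_sub_eq_integral [CompleteSpace E] {f φ : ℝ → E} {a b x : ℝ}
    (hφ : ContinuousOn φ (Ioo a b))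
    (hf : ∀ u v, a < u → u < v → v < b → f v - f u = ∫ t in u..v, φ t) (hx : x ∈ Ioo a b) :
    HasDerivAt f (φ x) x := by
  obtain ⟨c, hac, hcx⟩ := exists_between hx.1
  have hcx' : uIcc c x ⊆ Ioo a b := by
    rw [uIcc_of_le hcx.le]; exact Icc_subset_Ioo hac hx.2
  have hprim : HasDerivAt (fun v => f c + ∫ t in c..v, φ t) (φ x) x :=
    (intervalIntegral.integral_hasDerivAt_right ((hφ.mono hcx').intervalIntegrable)
      (hφ.stronglyMeasurableAtFilter isOpen_Ioo x hx)
      (hφ.continuousAt (isOpen_Ioo.mem_nhds hx))).const_add (f c)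
  refine hprim.congr_of_eventuallyEq ?_
  filter_upwards [isOpen_Ioo.mem_nhds (show x ∈ Ioo c b from ⟨hcx, hx.2⟩)] with v hv
  rw [← hf c v hac hv.1 hv.2, add_sub_cancel]

noncomputable def stepSlope (v : ℕ → E) (n : ℕ) (t : ℝ) : E :=
  (n : ℝ) • (v (⌊n * t⌋₊ + 1) - v ⌊n * t⌋₊)

theorem stepSlope_eqOn_Ico (v : ℕ → E) {n : ℕ} (hn : 0 < n) (j : ℕ) :
    EqOn (stepSlope v n) (fun _ => (n : ℝ) • (v (j + 1) - v j)) (Ico (j / n) ((j + 1) / n)) := by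
  intro t ⟨hjt, htj⟩
  have hn' : (0 : ℝ) < n := Nat.cast_pos.2 hn
  have hfloor : ⌊n * t⌋₊ = j := by
    rw [div_le_iff₀ hn'] at hjt
    rw [lt_div_iff₀ hn'] at htj
    rw [Nat.floor_eq_iff (by nlinarith [Nat.cast_nonneg (α := ℝ) j])]
    constructor <;> linarith
  simp only [stepSlope, hfloor]

theorem div_le_succ_div {n : ℕ} (j : ℕ) : (j : ℝ) / n ≤ (j + 1) / n := by
  gcongr; linarith

theorem intervalIntegrable_stepSlope_succ (v : ℕ → E) {n : ℕ} (hn : 0 < n) (j : ℕ) :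
    IntervalIntegrable (stepSlope v n) volume (j / n) ((j + 1) / n) := by
  refine (intervalIntegrable_congr_uIoo ((stepSlope_eqOn_Ico v hn j).mono ?_)).2
    intervalIntegrable_const
  rw [uIoo_of_le (div_le_succ_div j)]
  exact Ioo_subset_Ico_self

theorem integral_stepSlope_succ [CompleteSpace E] (v : ℕ → E) {n : ℕ} (hn : 0 < n) (j : ℕ) :
    ∫ t in (j / n : ℝ)..(j + 1) / n, stepSlope v n t = v (j + 1) - v j := by
  rw [intervalIntegral.integral_congr_Ioo_of_le (div_le_succ_div j)
    ((stepSlope_eqOn_Ico v hn j).mono Ioo_subset_Ico_self), intervalIntegral.integral_const,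
    smul_smul, ← sub_div, add_sub_cancel_left, one_div_mul_cancel (by positivity), one_smul]

theorem intervalIntegrable_stepSlope_zero (v : ℕ → E) {n : ℕ} (hn : 0 < n) (m : ℕ) :
    IntervalIntegrable (stepSlope v n) volume 0 (m / n) := by
  induction m with
  | zero => simp
  | succ m ih => exact_mod_cast ih.trans (intervalIntegrable_stepSlope_succ v hn m)

theorem integral_stepSlope_zero [CompleteSpace E] (v : ℕ → E) {n : ℕ} (hn : 0 < n) (m : ℕ) :
    ∫ t in (0 : ℝ)..m / n, stepSlope v n t = v m - v 0 := by
  induction m with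
  | zero => simp
  | succ m ih =>
    rw [Nat.cast_succ, ← intervalIntegral.integral_add_adjacent_intervals
      (intervalIntegrable_stepSlope_zero v hn m) (intervalIntegrable_stepSlope_succ v hn m),
      ih, integral_stepSlope_succ v hn m]
    abel

theorem intervalIntegrable_stepSlope (v : ℕ → E) {n : ℕ} (hn : 0 < n) (k m : ℕ) :
    IntervalIntegrable (stepSlope v n) volume (k / n) (m / n) :=
  (intervalIntegrable_stepSlope_zero v hn k).symm.trans (intervalIntegrable_stepSlope_zero v hn m)

theorem integral_stepSlope [CompleteSpace E] (v : ℕ → E) {n : ℕ} (hn : 0 < n) (k m : ℕ) :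
    ∫ t in (k / n : ℝ)..m / n, stepSlope v n t = v m - v k := by
  rw [← intervalIntegral.integral_interval_sub_left (intervalIntegrable_stepSlope_zero v hn m)
    (intervalIntegrable_stepSlope_zero v hn k), integral_stepSlope_zero v hn,
    integral_stepSlope_zero v hn, sub_sub_sub_cancel_right]

theorem sub_eq_integral_of_tendstoUniformlyOn_stepSlope [CompleteSpace E]
    {F : ℕ → ℕ → E} {f φ : ℝ → E} {c d x y : ℝ} (hc : 0 ≤ c)
    (hF : TendstoUniformlyOn (fun n => stepSlope (F n) n) φ atTop (Icc c d))
    (hφ : ContinuousOn φ (Icc c d))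
    (hfx : Tendsto (fun n : ℕ => F n ⌊n * x⌋₊) atTop (𝓝 (f x)))
    (hfy : Tendsto (fun n : ℕ => F n ⌊n * y⌋₊) atTop (𝓝 (f y)))
    (hx : x ∈ Ioc c d) (hy : y ∈ Ioc c d) :
    f y - f x = ∫ t in x..y, φ t := by
  have hpos : ∀ᶠ n : ℕ in atTop, 0 < n := eventually_gt_atTop 0
  refine tendsto_nhds_unique (hfy.sub hfx) ?_
  refine (hF.tendsto_intervalIntegral hφ ?_ (tendsto_natFloor_mul_div_natCast_nhdsWithin hc hx)
    (tendsto_natFloor_mul_div_natCast_nhdsWithin hc hy) (Ioc_subset_Icc_self hx)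
    (Ioc_subset_Icc_self hy)).congr' ?_
  · filter_upwards [hpos] with n hn using intervalIntegrable_stepSlope (F n) hn _ _
  · filter_upwards [hpos] with n hn using integral_stepSlope (F n) hn _ _

end Integral

theorem tendstoUniformlyOn_stepSlope {F G H : ℕ → ℕ → ℝ} {f g h : ℝ → ℝ} {ε ε' : ℝ}
    (hrec : ∀ n : ℕ, ∀ k < n, F n k = G n k + H n k * F n (k + 1))
    (hε : 0 ≤ ε) (hε' : ε' < 1)
    (hgconv : TendstoUniformlyOn (fun (n : ℕ) (x : ℝ) => (n : ℝ) * G n ⌊(n : ℝ) * x⌋₊) g atTop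
      (Icc ε ε'))
    (hhconv : TendstoUniformlyOn (fun (n : ℕ) (x : ℝ) => (n : ℝ) * (1 - H n ⌊(n : ℝ) * x⌋₊)) h
      atTop (Icc ε ε'))
    (hh : ContinuousOn h (Icc ε ε'))
    (hfconv : TendstoUniformlyOn (fun (n : ℕ) (x : ℝ) => F n ⌊(n : ℝ) * x⌋₊) f atTop (Icc 0 1))
    (hf : ContinuousOn f (Icc 0 1)) :
    TendstoUniformlyOn (fun n => stepSlope (F n) n) (fun t => h t * f t - g t) atTop
      (Icc ε ε') := by
  have hsub : Icc ε ε' ⊆ Icc 0 1 := Icc_subset_Icc hε hε'.le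
  have hpos : ∀ᶠ n : ℕ in atTop, 0 < n := eventually_gt_atTop 0
  have hshift : TendstoUniformlyOn (fun (n : ℕ) (x : ℝ) => F n (⌊(n : ℝ) * x⌋₊ + 1)) f atTop
      (Icc ε ε') := by
    refine (hfconv.comp_add_of_tendsto_zero (isCompact_Icc.uniformContinuousOn_of_continuous hf)
      hsub tendsto_one_div_atTop_nhds_zero_nat ?_).congr ?_
    · filter_upwards [tendsto_one_div_atTop_nhds_zero_nat.eventually_le_const (sub_pos.2 hε')]
        with n hn x hx
      exact ⟨by linarith [hx.1, (by positivity : (0 : ℝ) ≤ 1 / n)], by linarith [hx.2]⟩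
    · filter_upwards [hpos] with n hn x hx
      dsimp only
      rw [natFloor_mul_add_one_div hn (hε.trans hx.1)]
  have hlim := (hhconv.mul_of_bounded hshift (isCompact_Icc.exists_bound_of_continuousOn hh)
    (isCompact_Icc.exists_bound_of_continuousOn (hf.mono hsub))).fun_sub hgconv
  refine hlim.congr ?_
  filter_upwards [hpos] with n hn x hx
  rw [stepSlope, hrec n _ (natFloor_mul_lt hn (hε.trans hx.1) (hx.2.trans_lt hε')), smul_eq_mul]
  ring

theorem stmt_11
    (F G H : ℕ → ℕ → ℝ) (μ : ℝ) (f g h : ℝ → ℝ)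
    (hrec : ∀ n : ℕ, ∀ k < n, F n k = G n k + H n k * F n (k + 1))
    (hterm : ∀ n : ℕ, F n n = μ)
    (hgconv : ∀ ε ε' : ℝ, 0 < ε → ε < ε' → ε' < 1 →
      TendstoUniformlyOn (fun (n : ℕ) (x : ℝ) => (n : ℝ) * G n ⌊(n : ℝ) * x⌋₊) g atTop (Set.Icc ε ε'))
    (hhconv : ∀ ε ε' : ℝ, 0 < ε → ε < ε' → ε' < 1 →
      TendstoUniformlyOn (fun (n : ℕ) (x : ℝ) => (n : ℝ) * (1 - H n ⌊(n : ℝ) * x⌋₊)) h atTop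
        (Set.Icc ε ε'))
    (hg : ContinuousOn g (Set.Ioo 0 1)) (hh : ContinuousOn h (Set.Ioo 0 1))
    (hfconv : TendstoUniformlyOn (fun (n : ℕ) (x : ℝ) => F n ⌊(n : ℝ) * x⌋₊) f atTop (Set.Icc 0 1))
    (hf : ContinuousOn f (Set.Icc 0 1)) :
    f 1 = μ ∧ ∀ x ∈ Set.Ioo (0 : ℝ) 1, HasDerivAt f (f x * h x - g x) x := by
  have hφ : ContinuousOn (fun t => h t * f t - g t) (Ioo 0 1) :=
    (hh.mul (hf.mono Ioo_subset_Icc_self)).sub hg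
  refine ⟨tendsto_nhds_unique (hfconv.tendsto_at (right_mem_Icc.2 zero_le_one)) ?_,
    fun x hx => ?_⟩
  · simp only [mul_one, Nat.floor_natCast, hterm, tendsto_const_nhds]
  rw [mul_comm]
  refine hasDerivAt_of_sub_eq_integral hφ (fun u v hu huv hv => ?_) hx
  obtain ⟨ε, hε, hεu⟩ := exists_between hu
  obtain ⟨ε', hvε', hε'⟩ := exists_between hv
  have hεε' : ε < ε' := hεu.trans (huv.trans hvε')
  have hsub : Icc ε ε' ⊆ Ioo 0 1 := Icc_subset_Ioo hε hε'
  have hslope := tendstoUniformlyOn_stepSlope hrec hε.le hε' (hgconv ε ε' hε hεε' hε')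
    (hhconv ε ε' hε hεε' hε') (hh.mono hsub) hfconv hf
  exact sub_eq_integral_of_tendstoUniformlyOn_stepSlope hε.le hslope (hφ.mono hsub)
    (hfconv.tendsto_at ⟨hu.le, (huv.trans hv).le⟩) (hfconv.tendsto_at ⟨(hu.trans huv).le, hv.le⟩)
    ⟨hεu, huv.le.trans hvε'.le⟩ ⟨hεu.trans huv, hvε'.le⟩
end
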